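/- arXiv:2502.08028 — 4 statements merged into one kernel-verified Lean document; each statement's English description precedes it below -/
import Mathlib

section
/- Let κ > 0, n ∈ ℕ, and M ∈ ℕ with M > max{2n+2, 8e·κ²}. Suppose B_m are nonnegative reals with B_m ≤ κ^m/m! for all m. Then the tail of the inversion series satisfies |Σ_{m=M}^∞ (−1)^{m−n} C(m,n) B_m| ≤ 1/(√(2πe)·n!·2^{M−1}). -/
lemma fact_lb (j : ℕ) (hj : 3 ≤ j) :
    Real.sqrt (2 * Real.pi * Real.exp 1) * ((j : ℝ) / Real.exp 1) ^ j ≤ (j.factorial : ℝ) := by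
  induction j, hj using Nat.le_induction with
  | base =>
    have he : (0:ℝ) < Real.exp 1 := Real.exp_pos 1
    have hee : (2.7182818283:ℝ) < Real.exp 1 := Real.exp_one_gt_d9
    have hpi : Real.pi < 3.15 := Real.pi_lt_d2
    have hpi0 : (0:ℝ) < Real.pi := Real.pi_pos
    have h1 : Real.sqrt (2 * Real.pi * Real.exp 1) ≤ 2 * Real.exp 1 ^ 3 / 9 := by
      rw [show 2 * Real.exp 1 ^ 3 / 9 = Real.sqrt ((2 * Real.exp 1 ^ 3 / 9)^2) from
        (Real.sqrt_sq (by positivity)).symm]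
      apply Real.sqrt_le_sqrt
      nlinarith [pow_le_pow_left₀ (show (0:ℝ) ≤ 2.7 by norm_num)
        (show (2.7:ℝ) ≤ Real.exp 1 by linarith) 5]
    have h2 : (((3:ℕ):ℝ) / Real.exp 1) ^ 3 = 27 / Real.exp 1 ^ 3 := by
      rw [div_pow]; norm_num
    have h3 : ((Nat.factorial 3 : ℕ) : ℝ) = 6 := by norm_num [Nat.factorial]
    rw [h2, h3]
    calc Real.sqrt (2 * Real.pi * Real.exp 1) * (27 / Real.exp 1 ^ 3)
        ≤ (2 * Real.exp 1 ^ 3 / 9) * (27 / Real.exp 1 ^ 3) := by gcongr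
      _ = 6 := by field_simp; ring
  | succ j hj ih =>
    have hj0 : (0:ℝ) < j := by positivity
    have he : (0:ℝ) < Real.exp 1 := Real.exp_pos 1
    have hexp : ((j:ℝ)+1)^j ≤ Real.exp 1 * (j:ℝ)^j := by
      have h1 : 1 + 1/(j:ℝ) ≤ Real.exp (1/(j:ℝ)) := by
        have := Real.add_one_le_exp (1/(j:ℝ)); linarith
      have h2 : (1 + 1/(j:ℝ))^j ≤ (Real.exp (1/(j:ℝ)))^j :=
        pow_le_pow_left₀ (by positivity) h1 j
      have h3 : (Real.exp (1/(j:ℝ)))^j = Real.exp 1 := by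
        rw [← Real.exp_nat_mul]
        congr 1
        field_simp
      have h4 : (1 + 1/(j:ℝ))^j = ((j:ℝ)+1)^j / (j:ℝ)^j := by
        rw [← div_pow]
        congr 1
        field_simp
      rw [h4, h3] at h2
      rw [div_le_iff₀ (by positivity)] at h2
      linarith [h2]
    have hmain : (((j:ℝ)+1)/Real.exp 1)^(j+1) ≤ ((j:ℝ)+1) * ((j:ℝ)/Real.exp 1)^j := by
      have e1 : (((j:ℝ)+1))^(j+1) = ((j:ℝ)+1)^j * ((j:ℝ)+1) := pow_succ _ _
      have e2 : Real.exp 1^(j+1) = Real.exp 1^j * Real.exp 1 := pow_succ _ _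
      rw [div_pow, div_pow, e1, e2, div_le_iff₀ (by positivity), mul_assoc]
      have h6 : ((j:ℝ)^j/Real.exp 1^j) * (Real.exp 1^j * Real.exp 1)
          = (j:ℝ)^j * Real.exp 1 := by field_simp
      rw [h6]
      nlinarith [mul_le_mul_of_nonneg_right hexp (show (0:ℝ) ≤ (j:ℝ)+1 by positivity)]
    push_cast [Nat.factorial_succ]
    calc Real.sqrt (2 * Real.pi * Real.exp 1) * (((j:ℝ)+1)/Real.exp 1)^(j+1)
        ≤ Real.sqrt (2 * Real.pi * Real.exp 1) * (((j:ℝ)+1) * ((j:ℝ)/Real.exp 1)^j) := by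
          gcongr
      _ = ((j:ℝ)+1) * (Real.sqrt (2 * Real.pi * Real.exp 1) * ((j:ℝ)/Real.exp 1)^j) := by ring
      _ ≤ ((j:ℝ)+1) * (j.factorial : ℝ) := by gcongr


/-- Truncation-error bound: if `B_m ≥ 0` and `B_m ≤ κ^m/m!`, and the truncation point
`M` satisfies `M > max{2n+2, 8e·κ²}`, then the tail of the inversion series satisfies
`|Σ_{m=M}^∞ (−1)^{m−n} C(m,n) B_m| ≤ 1/(√(2πe)·n!·2^{M−1})`. -/
theorem truncation_error_bound
    (κ : ℝ) (hκ : 0 < κ) (n M : ℕ)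
    (hM : (M : ℝ) > max (2 * (n : ℝ) + 2) (8 * Real.exp 1 * κ ^ 2))
    (B : ℕ → ℝ) (hB0 : ∀ m, 0 ≤ B m)
    (hBbound : ∀ m : ℕ, B m ≤ κ ^ m / (m.factorial : ℝ)) :
    (Summable fun m : ℕ => ((m + M).choose n : ℝ) * B (m + M)) ∧
    |∑' m : ℕ, (-1 : ℝ) ^ ((m + M) - n) * ((m + M).choose n : ℝ) * B (m + M)|
      ≤ 1 / (Real.sqrt (2 * Real.pi * Real.exp 1) * (n.factorial : ℝ) * 2 ^ (M - 1)) := by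
  set C : ℝ := Real.sqrt (2 * Real.pi * Real.exp 1) with hCdef
  have he : (0:ℝ) < Real.exp 1 := Real.exp_pos 1
  have hee : Real.exp 1 < 3 := by
    have := Real.exp_one_lt_d9; linarith
  have hC : 0 < C := Real.sqrt_pos.mpr (by positivity)
  have hM1 : (M:ℝ) > 2 * n + 2 := lt_of_le_of_lt (le_max_left _ _) hM
  have hM2 : (M:ℝ) > 8 * Real.exp 1 * κ ^ 2 := lt_of_le_of_lt (le_max_right _ _) hM
  have hMn' : (2*n+2 : ℕ) < M := by exact_mod_cast (by push_cast; linarith : ((2*n+2 : ℕ) : ℝ) < (M:ℝ))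
  have hMn : 2 * n + 3 ≤ M := by omega
  have hMpos : 0 < M := by omega
  have hnfac : (0:ℝ) < (n.factorial : ℝ) := by exact_mod_cast n.factorial_pos
  -- key pointwise bound
  have key : ∀ s : ℕ, M ≤ s →
      ((s.choose n : ℝ)) * B s ≤ 1 / ((n.factorial : ℝ) * C) * (1/2)^s := by
    intro s hs
    have hns : n ≤ s := by omega
    set j : ℕ := s - n with hjdef
    have hj3 : 3 ≤ j := by omega
    have h2j : s + 3 ≤ 2 * j := by omega
    have hjfac : (0:ℝ) < (j.factorial : ℝ) := by exact_mod_cast j.factorial_pos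
    have hjR : (3:ℝ) ≤ (j:ℝ) := by exact_mod_cast hj3
    have hsR : (s:ℝ) ≤ 2 * (j:ℝ) := by
      have : (s:ℝ) + 3 ≤ 2 * (j:ℝ) := by exact_mod_cast h2j
      linarith
    have hMs : (M:ℝ) ≤ (s:ℝ) := by exact_mod_cast hs
    have hb1 : (1:ℝ) ≤ (j:ℝ) / Real.exp 1 := by
      rw [le_div_iff₀ he]; linarith
    have h4k : (2*κ)^2 ≤ (j:ℝ) / Real.exp 1 := by
      rw [le_div_iff₀ he]
      nlinarith
    -- squared comparison
    have hsq : ((2*κ)^s)^2 ≤ (((j:ℝ)/Real.exp 1)^j)^2 := by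
      calc ((2*κ)^s)^2 = ((2*κ)^2)^s := by rw [← pow_mul, ← pow_mul, Nat.mul_comm]
        _ ≤ ((j:ℝ)/Real.exp 1)^s := pow_le_pow_left₀ (sq_nonneg _) h4k s
        _ ≤ ((j:ℝ)/Real.exp 1)^(j*2) := pow_le_pow_right₀ hb1 (by omega)
        _ = (((j:ℝ)/Real.exp 1)^j)^2 := pow_mul _ _ _
    have hab : (2*κ)^s ≤ ((j:ℝ)/Real.exp 1)^j := by
      have h2 := Real.sqrt_le_sqrt hsq
      rwa [Real.sqrt_sq (by positivity), Real.sqrt_sq (by positivity)] at h2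
    have hkey2 : C * (2*κ)^s ≤ (j.factorial : ℝ) :=
      le_trans (by gcongr) (fact_lb j hj3)
    -- numerator bound : κ^s ≤ j! / (C * 2^s)
    have hnum : κ^s ≤ (j.factorial : ℝ) / (C * 2^s) := by
      rw [le_div_iff₀ (by positivity)]
      calc κ^s * (C * 2^s) = C * (2*κ)^s := by rw [mul_pow]; ring
        _ ≤ (j.factorial : ℝ) := hkey2
    have hchoose : (s.choose n : ℝ) * (n.factorial : ℝ) * (j.factorial : ℝ) = (s.factorial : ℝ) := by
      exact_mod_cast congrArg (Nat.cast (R := ℝ)) (Nat.choose_mul_factorial_mul_factorial hns)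
    have hsfac : (0:ℝ) < (s.factorial : ℝ) := by exact_mod_cast s.factorial_pos
    have hchoosepos : (0:ℝ) < (s.choose n : ℝ) := by
      exact_mod_cast Nat.choose_pos hns
    calc (s.choose n : ℝ) * B s
        ≤ (s.choose n : ℝ) * (κ^s / (s.factorial : ℝ)) := by
          gcongr
          exact hBbound s
      _ = κ^s / ((n.factorial : ℝ) * (j.factorial : ℝ)) := by
          rw [← hchoose]; field_simp
      _ ≤ ((j.factorial : ℝ) / (C * 2^s)) / ((n.factorial : ℝ) * (j.factorial : ℝ)) := by
          gcongr
      _ = 1 / ((n.factorial : ℝ) * C) * (1/2)^s := by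
          rw [div_pow, one_pow]
          field_simp
  -- geometric majorant
  set A : ℝ := 1 / ((n.factorial : ℝ) * C) * (1/2)^M with hAdef
  have hA : 0 < A := by positivity
  have key' : ∀ m : ℕ, ((m + M).choose n : ℝ) * B (m + M) ≤ A * (1/2)^m := by
    intro m
    have := key (m + M) (Nat.le_add_left M m)
    calc ((m + M).choose n : ℝ) * B (m + M) ≤ 1 / ((n.factorial : ℝ) * C) * (1/2)^(m+M) := this
      _ = A * (1/2)^m := by rw [hAdef, pow_add]; ring
  have hGsum : Summable (fun m : ℕ => A * (1/2:ℝ)^m) :=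
    (summable_geometric_of_lt_one (by norm_num) (by norm_num)).mul_left A
  have hfnonneg : ∀ m : ℕ, 0 ≤ ((m + M).choose n : ℝ) * B (m + M) := by
    intro m; exact mul_nonneg (Nat.cast_nonneg _) (hB0 _)
  have hSum : Summable (fun m : ℕ => ((m + M).choose n : ℝ) * B (m + M)) :=
    Summable.of_nonneg_of_le hfnonneg key' hGsum
  refine ⟨hSum, ?_⟩
  -- the series with signs
  have habs : (fun m : ℕ => ‖(-1 : ℝ) ^ ((m + M) - n) * ((m + M).choose n : ℝ) * B (m + M)‖)
      = fun m : ℕ => ((m + M).choose n : ℝ) * B (m + M) := by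
    funext m
    rw [norm_mul, norm_mul, norm_pow, norm_neg, norm_one, one_pow, one_mul,
      Real.norm_eq_abs, Real.norm_eq_abs, abs_of_nonneg (Nat.cast_nonneg _),
      abs_of_nonneg (hB0 _)]
  have hSumAbs : Summable (fun m : ℕ =>
      ‖(-1 : ℝ) ^ ((m + M) - n) * ((m + M).choose n : ℝ) * B (m + M)‖) := by
    rw [habs]; exact hSum
  have h1 : |∑' m : ℕ, (-1 : ℝ) ^ ((m + M) - n) * ((m + M).choose n : ℝ) * B (m + M)|
      ≤ ∑' m : ℕ, ((m + M).choose n : ℝ) * B (m + M) := by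
    have := norm_tsum_le_tsum_norm hSumAbs
    rwa [habs, Real.norm_eq_abs] at this
  have h2 : ∑' m : ℕ, ((m + M).choose n : ℝ) * B (m + M) ≤ ∑' m : ℕ, A * (1/2:ℝ)^m :=
    Summable.tsum_le_tsum key' hSum hGsum
  have h3 : ∑' m : ℕ, A * (1/2:ℝ)^m = 2 * A := by
    rw [tsum_mul_left, tsum_geometric_of_lt_one (by norm_num) (by norm_num)]
    norm_num [mul_comm]
  have h4 : 2 * A = 1 / (C * (n.factorial : ℝ) * 2 ^ (M - 1)) := by
    rw [hAdef]
    have hMeq : M = (M - 1) + 1 := (Nat.succ_pred_eq_of_pos hMpos).symm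
    rw [hMeq]
    rw [pow_succ]
    have h2pow : (0:ℝ) < 2 ^ (M - 1) := by positivity
    rw [div_pow, one_pow]
    field_simp
    ring
    rw [Nat.add_sub_cancel_left]
  calc |∑' m : ℕ, (-1 : ℝ) ^ ((m + M) - n) * ((m + M).choose n : ℝ) * B (m + M)|
      ≤ ∑' m : ℕ, ((m + M).choose n : ℝ) * B (m + M) := h1
    _ ≤ ∑' m : ℕ, A * (1/2:ℝ)^m := h2
    _ = 2 * A := h3
    _ = 1 / (C * (n.factorial : ℝ) * 2 ^ (M - 1)) := h4
end

section
/- Let D₀ be an N×N real matrix that is invertible, has nonnegative off-diagonal entries, nonpositive diagonal entries, and nonpositive row sums, with all eigenvalues having strictly negative real part, and let D₁ = βκᵀ with κᵀ1 = 1 and D := D₀ + D₁ having zero row sums (D1 = 0). Let π be a probability row vector with πᵀD = 0, and set α := −κᵀD₀⁻¹1. Then α·πᵀD₁ = κᵀ. -/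
/-!
Since `D₁ = βκᵀ` has rank one, `πᵀD₁ = (πᵀβ) κᵀ`, and stationarity `πᵀ(D₀ + D₁) = 0` then says
`πᵀD₀ = −(πᵀβ) κᵀ`, i.e. `πᵀ = −(πᵀβ) κᵀD₀⁻¹`. Pairing with `1` and using `πᵀ1 = 1` gives
`(πᵀβ) α = 1`, hence `α πᵀD₁ = (πᵀβ) α κᵀ = κᵀ`.
-/

open Matrix

namespace Matrix

variable {n R : Type*} [Fintype n] [DecidableEq n] [CommRing R]

theorem eq_neg_smul_vecMul_inv_of_vecMul_add_vecMulVec_eq_zero {A : Matrix n n R}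
    (hA : IsUnit A) {π β κ : n → R} (h : π ᵥ* (A + vecMulVec β κ) = 0) :
    π = -(π ⬝ᵥ β) • (κ ᵥ* A⁻¹) := by
  have hπA : π ᵥ* A = -(π ⬝ᵥ β) • κ := by
    rw [vecMul_add, vecMul_vecMulVec] at h
    rw [neg_smul]
    exact eq_neg_of_add_eq_zero_left h
  calc π = π ᵥ* A ᵥ* A⁻¹ := by
        rw [vecMul_vecMul, mul_nonsing_inv A ((isUnit_iff_isUnit_det A).mp hA), vecMul_one]
    _ = -(π ⬝ᵥ β) • (κ ᵥ* A⁻¹) := by rw [hπA, smul_vecMul]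

theorem dotProduct_mul_neg_dotProduct_inv_mulVec_one_eq_one {A : Matrix n n R}
    (hA : IsUnit A) {π β κ : n → R} (h : π ᵥ* (A + vecMulVec β κ) = 0) (hπ1 : ∑ i, π i = 1) :
    (π ⬝ᵥ β) * -(κ ⬝ᵥ (A⁻¹ *ᵥ 1)) = 1 := by
  rw [← dotProduct_one, eq_neg_smul_vecMul_inv_of_vecMul_add_vecMulVec_eq_zero hA h,
    smul_dotProduct, ← dotProduct_mulVec, smul_eq_mul] at hπ1
  linear_combination hπ1

end Matrix

theorem mean_interarrival_identity_general
    {N : ℕ} (D₀ : Matrix (Fin N) (Fin N) ℝ)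
    (hD₀unit : IsUnit D₀)
    (β κv : Fin N → ℝ)
    (D₁ : Matrix (Fin N) (Fin N) ℝ) (hD₁ : D₁ = vecMulVec β κv)
    (π : Fin N → ℝ) (hπ1 : ∑ i, π i = 1)
    (hπD : π ᵥ* (D₀ + D₁) = 0)
    (α : ℝ) (hα : α = -(κv ⬝ᵥ (D₀⁻¹ *ᵥ fun _ => 1))) :
    α • (π ᵥ* D₁) = κv := by
  subst hD₁ hα
  rw [vecMul_vecMulVec, smul_smul, mul_comm]
  convert one_smul ℝ κv using 2
  exact dotProduct_mul_neg_dotProduct_inv_mulVec_one_eq_one hD₀unit hπD hπ1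

/-- Under the renewal condition, with `α = −κᵀD₀⁻¹1` the mean inter-arrival time and `π`
the stationary distribution of `D = D₀ + D₁`, we have `α·πᵀD₁ = κᵀ`. -/
theorem mean_interarrival_identity
    {N : ℕ} (D₀ : Matrix (Fin N) (Fin N) ℝ)
    (hD₀unit : IsUnit D₀)
    (hoff : ∀ i j, i ≠ j → 0 ≤ D₀ i j)
    (hdiag : ∀ i, D₀ i i ≤ 0)
    (hrow : ∀ i, ∑ j, D₀ i j ≤ 0)
    (hspec : ∀ μ ∈ spectrum ℂ (D₀.map Complex.ofReal), μ.re < 0)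
    (β κv : Fin N → ℝ) (hκ1 : ∑ j, κv j = 1)
    (D₁ : Matrix (Fin N) (Fin N) ℝ) (hD₁ : D₁ = vecMulVec β κv)
    (hDrow : ∀ i, ∑ j, (D₀ + D₁) i j = 0)
    (π : Fin N → ℝ) (hπ0 : ∀ i, 0 ≤ π i) (hπ1 : ∑ i, π i = 1)
    (hπD : π ᵥ* (D₀ + D₁) = 0)
    (hπβ : 0 < π ⬝ᵥ β)
    (α : ℝ) (hα : α = -(κv ⬝ᵥ (D₀⁻¹ *ᵥ fun _ => 1))) :
    α • (π ᵥ* D₁) = κv :=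
  mean_interarrival_identity_general D₀ hD₀unit β κv D₁ hD₁ π hπ1 hπD α hα
end

section
/- Let D be an N×N irreducible Q-matrix (nonnegative off-diagonal entries, zero row sums) and let D₁ = βκᵀ be a nonzero rank-one matrix with nonnegative entries, β = D₁1, κᵀ1 = 1, such that D₀ := D − D₁ has nonnegative off-diagonal entries. Then D₀ is nonsingular. -/
open Matrix

/-- A matrix is irreducible iff from every nonempty proper subset of indices there is a
nonzero entry leaving the subset (equivalently, no simultaneous permutation of rows and
columns puts the matrix in block upper triangular form). -/
def MatrixIrreducible {N : ℕ} (D : Matrix (Fin N) (Fin N) ℝ) : Prop :=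
  ∀ S : Set (Fin N), S.Nonempty → S ≠ Set.univ → ∃ i ∈ S, ∃ j ∉ S, D i j ≠ 0

/-!
A kernel vector `v` of `D₀` would attain its maximal modulus on a set `S` of rows. Since
`D₀` has nonnegative off-diagonal entries and row sums `-(D₁ 1)ᵢ ≤ 0`, it is weakly diagonally
dominant, and the usual Gershgorin estimate at a row of `S` forces that row to be not strictly
dominant and every off-diagonal neighbour of it to lie in `S` as well. A row of `S` that is
not strictly dominant is a zero row of `D₁`, on which `D₀` and `D` agree, so `S` is closed under
the off-diagonal support of `D`; by irreducibility `S` is everything, and then `D₁ = 0`.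
-/

open Finset

namespace Matrix

def OffDiagClosed {n R : Type*} [Zero R] (A : Matrix n n R) (S : Set n) : Prop :=
  ∀ i ∈ S, ∀ j, j ≠ i → A i j ≠ 0 → j ∈ S

section NormedField

variable {n K : Type*} [Fintype n] [DecidableEq n] [NormedField K] {A : Matrix n n K}
  {v : n → K}

theorem norm_diag_mul_le_of_mulVec_eq_zero (hv : A *ᵥ v = 0) (i : n) :
    ‖A i i‖ * ‖v i‖ ≤ ∑ j ∈ univ.erase i, ‖A i j‖ * ‖v j‖ := by
  have h : A i i * v i = -∑ j ∈ univ.erase i, A i j * v j := by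
    have hi := congrFun hv i
    rw [mulVec, dotProduct, ← add_sum_erase _ _ (mem_univ i)] at hi
    exact eq_neg_of_add_eq_zero_left hi
  calc ‖A i i‖ * ‖v i‖ = ‖∑ j ∈ univ.erase i, A i j * v j‖ := by rw [← norm_mul, h, norm_neg]
    _ ≤ ∑ j ∈ univ.erase i, ‖A i j‖ * ‖v j‖ := (norm_sum_le _ _).trans_eq (by simp_rw [norm_mul])

theorem not_sum_norm_lt_of_mulVec_eq_zero {i : n} (hv : A *ᵥ v = 0) (hmax : ∀ j, ‖v j‖ ≤ ‖v i‖)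
    (hvi : v i ≠ 0) : ¬ ∑ j ∈ univ.erase i, ‖A i j‖ < ‖A i i‖ := by
  intro hlt
  have hpos : 0 < ‖v i‖ := norm_pos_iff.mpr hvi
  have : ‖A i i‖ * ‖v i‖ ≤ (∑ j ∈ univ.erase i, ‖A i j‖) * ‖v i‖ := by
    rw [sum_mul]
    exact (norm_diag_mul_le_of_mulVec_eq_zero hv i).trans
      (sum_le_sum fun j _ => by gcongr; exact hmax j)
  exact (mul_lt_mul_of_pos_right hlt hpos).not_ge this

theorem norm_eq_of_mulVec_eq_zero {i : n} (hv : A *ᵥ v = 0)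
    (hdom : ∑ j ∈ univ.erase i, ‖A i j‖ ≤ ‖A i i‖) (hmax : ∀ j, ‖v j‖ ≤ ‖v i‖) {j : n}
    (hji : j ≠ i) (hA : A i j ≠ 0) : ‖v j‖ = ‖v i‖ := by
  have hgap : ∑ k ∈ univ.erase i, ‖A i k‖ * (‖v i‖ - ‖v k‖) ≤ 0 := by
    have := norm_diag_mul_le_of_mulVec_eq_zero hv i
    have := mul_le_mul_of_nonneg_right hdom (norm_nonneg (v i))
    simp only [mul_sub, sum_sub_distrib, ← sum_mul]
    linarith
  have hterm := (sum_eq_zero_iff_of_nonneg fun k _ =>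
      mul_nonneg (norm_nonneg _) (sub_nonneg.mpr (hmax k))).mp
    (le_antisymm hgap (sum_nonneg fun k _ => mul_nonneg (norm_nonneg _) (sub_nonneg.mpr (hmax k))))
    j (mem_erase.mpr ⟨hji, mem_univ j⟩)
  rcases mul_eq_zero.mp hterm with h | h
  · exact absurd (norm_eq_zero.mp h) hA
  · exact (sub_eq_zero.mp h).symm

/-- Nonsingularity of weakly chained diagonally dominant matrices. -/
theorem det_ne_zero_of_sum_row_le_diag_of_offDiagClosed
    (hdom : ∀ i, ∑ j ∈ univ.erase i, ‖A i j‖ ≤ ‖A i i‖)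
    (hstrict : ∀ S : Set n, S.Nonempty → A.OffDiagClosed S →
      ∃ i ∈ S, ∑ j ∈ univ.erase i, ‖A i j‖ < ‖A i i‖) :
    A.det ≠ 0 := by
  intro hdet
  obtain ⟨v, hv0, hv⟩ := exists_mulVec_eq_zero_iff.mpr hdet
  obtain ⟨i₀, hi₀⟩ := Function.ne_iff.mp hv0
  have : Nonempty n := ⟨i₀⟩
  obtain ⟨m, hm⟩ := Finite.exists_max (‖v ·‖)
  let S : Set n := {i | ‖v i‖ = ‖v m‖}
  have hmaxS : ∀ i ∈ S, ∀ k, ‖v k‖ ≤ ‖v i‖ := fun i hi k => hi ▸ hm k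
  have hclosed : A.OffDiagClosed S := fun i hi j hji hA =>
    (norm_eq_of_mulVec_eq_zero hv (hdom i) (hmaxS i hi) hji hA).trans hi
  obtain ⟨i, hi, hlt⟩ := hstrict S ⟨m, rfl⟩ hclosed
  have hvi : v i ≠ 0 := norm_pos_iff.mp ((norm_pos_iff.mpr hi₀).trans_le (hmaxS i hi i₀))
  exact not_sum_norm_lt_of_mulVec_eq_zero hv (hmaxS i hi) hvi hlt

end NormedField

section Real

variable {n : Type*} [Fintype n] [DecidableEq n] {A : Matrix n n ℝ}

theorem abs_diag_sub_sum_abs_offDiag {i : n} (hoff : ∀ j, j ≠ i → 0 ≤ A i j)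
    (hrow : ∑ j, A i j ≤ 0) :
    |A i i| - ∑ j ∈ univ.erase i, |A i j| = -∑ j, A i j := by
  have habs : ∑ j ∈ univ.erase i, |A i j| = ∑ j ∈ univ.erase i, A i j :=
    sum_congr rfl fun j hj => abs_of_nonneg (hoff j (ne_of_mem_erase hj))
  have hs : 0 ≤ ∑ j ∈ univ.erase i, A i j :=
    sum_nonneg fun j hj => hoff j (ne_of_mem_erase hj)
  rw [← add_sum_erase _ _ (mem_univ i)] at hrow ⊢
  rw [habs, abs_of_nonpos (by linarith)]
  ring

theorem det_ne_zero_of_offDiag_nonneg_of_sum_row_nonpos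
    (hoff : ∀ i j, i ≠ j → 0 ≤ A i j) (hrow : ∀ i, ∑ j, A i j ≤ 0)
    (hneg : ∀ S : Set n, S.Nonempty → A.OffDiagClosed S → ∃ i ∈ S, ∑ j, A i j < 0) :
    A.det ≠ 0 := by
  have hgap i := abs_diag_sub_sum_abs_offDiag (fun j hj => hoff i j hj.symm) (hrow i)
  refine det_ne_zero_of_sum_row_le_diag_of_offDiagClosed (fun i => ?_) fun S hS hc => ?_
  · simp only [Real.norm_eq_abs]
    linarith [hgap i, hrow i]
  · obtain ⟨i, hi, hlt⟩ := hneg S hS hc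
    refine ⟨i, hi, ?_⟩
    simp only [Real.norm_eq_abs]
    linarith [hgap i]

end Real

end Matrix

theorem MatrixIrreducible.eq_univ_of_offDiagClosed {N : ℕ} {D : Matrix (Fin N) (Fin N) ℝ}
    (hirr : MatrixIrreducible D) {S : Set (Fin N)} (hS : S.Nonempty) (hc : D.OffDiagClosed S) :
    S = Set.univ := by
  by_contra hne
  obtain ⟨i, hi, j, hj, hD⟩ := hirr S hS hne
  exact hj (hc i hi j (fun h => hj (h ▸ hi)) hD)

theorem D0_nonsingular_of_renewal_general
    {N : ℕ} (D : Matrix (Fin N) (Fin N) ℝ)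
    (hrow : ∀ i, ∑ j, D i j = 0)
    (hirr : MatrixIrreducible D)
    (D₁ : Matrix (Fin N) (Fin N) ℝ)
    (hD₁ne : D₁ ≠ 0) (hD₁0 : ∀ i j, 0 ≤ D₁ i j)
    (D₀ : Matrix (Fin N) (Fin N) ℝ) (hD₀ : D₀ = D - D₁)
    (hD₀off : ∀ i j, i ≠ j → 0 ≤ D₀ i j) :
    IsUnit D₀ := by
  subst hD₀
  have hrow₀ : ∀ i, ∑ j, (D - D₁) i j = -∑ j, D₁ i j := fun i => by
    simp [Matrix.sub_apply, sum_sub_distrib, hrow i]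
  have hrow₁ : ∀ i, 0 ≤ ∑ j, D₁ i j := fun i => sum_nonneg fun j _ => hD₁0 i j
  rw [isUnit_iff_isUnit_det, isUnit_iff_ne_zero]
  refine det_ne_zero_of_offDiag_nonneg_of_sum_row_nonpos hD₀off
    (fun i => by linarith [hrow₀ i, hrow₁ i]) fun S hS hc => ?_
  by_contra! hzero
  have hD₁S : ∀ i ∈ S, ∀ j, D₁ i j = 0 := fun i hi j =>
    (sum_eq_zero_iff_of_nonneg fun j _ => hD₁0 i j).mp
      (by linarith [hzero i hi, hrow₀ i, hrow₁ i]) j (mem_univ j)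
  have hSuniv : S = Set.univ := hirr.eq_univ_of_offDiagClosed hS fun i hi j hji hDij =>
    hc i hi j hji (by simpa [hD₁S i hi j] using hDij)
  exact hD₁ne (ext fun i j => hD₁S i (hSuniv ▸ Set.mem_univ i) j)

/-- If `D` is an irreducible Q-matrix and `D₁ = βκᵀ` is a nonzero rank-one nonnegative
matrix with `κᵀ1 = 1` such that `D₀ = D − D₁` has nonnegative off-diagonal entries, then
`D₀` is nonsingular. -/
theorem D0_nonsingular_of_renewal
    {N : ℕ} (D : Matrix (Fin N) (Fin N) ℝ)
    (hoff : ∀ i j, i ≠ j → 0 ≤ D i j)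
    (hrow : ∀ i, ∑ j, D i j = 0)
    (hirr : MatrixIrreducible D)
    (β κv : Fin N → ℝ)
    (D₁ : Matrix (Fin N) (Fin N) ℝ) (hD₁ : D₁ = vecMulVec β κv)
    (hD₁ne : D₁ ≠ 0) (hD₁0 : ∀ i j, 0 ≤ D₁ i j)
    (hβ : β = D₁ *ᵥ fun _ => 1) (hκ1 : ∑ j, κv j = 1)
    (D₀ : Matrix (Fin N) (Fin N) ℝ) (hD₀ : D₀ = D - D₁)
    (hD₀off : ∀ i j, i ≠ j → 0 ≤ D₀ i j) :
    IsUnit D₀ :=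
  D0_nonsingular_of_renewal_general D hrow hirr D₁ hD₁ne hD₁0 D₀ hD₀ hD₀off
end

section
/- Let λ, δ, k₁, k₂ > 0 and define B_m = (1/m!)·(λ/δ)^m · (k₂/δ)^{(m)} / ((k₁/δ + k₂/δ)^{(m)}) for m ∈ ℕ, where x^{(m)} = x(x+1)⋯(x+m−1) is the rising factorial. Then the alternating series P_n := Σ_{m=n}^∞ (−1)^{m−n} C(m,n) B_m converges absolutely and equals (1/n!)·(λ/δ)^n·(k₂/δ)^{(n)}/((k₁/δ+k₂/δ)^{(n)})·₁F₁(k₂/δ+n, (k₁+k₂)/δ+n; −λ/δ), where ₁F₁(a,b;z) = Σ_{k≥0} (a^{(k)}/b^{(k)})·z^k/k! is the confluent hypergeometric function. -/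
/-!
Substituting `m = n + k`, the splitting `x^{(n+k)} = x^{(n)} (x+n)^{(k)}` of rising factorials and
`C(n+k, n) n! k! = (n+k)!` turn `C(n+k, n) B_{n+k}` into `B_n` times the `k`-th term of
`₁F₁(a+n, b+n; t)`, with `a = k₂/δ`, `b = (k₁+k₂)/δ`, `t = λ/δ`; the sign `(-1)^k` replaces `t` by `-t`.
Since `0 ≤ a ≤ b`, the Pochhammer ratio `(a+n)^{(k)}/(b+n)^{(k)}` lies in `[0, 1]`, so these terms
are dominated by `|t|^k / k!`, which gives absolute convergence.
-/

open Polynomial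
open scoped Nat

theorem ascPochhammer_eval_add {S : Type*} [CommSemiring S] (n k : ℕ) (x : S) :
    (ascPochhammer S (n + k)).eval x =
      (ascPochhammer S n).eval x * (ascPochhammer S k).eval (x + n) := by
  rw [← ascPochhammer_mul, eval_mul, eval_comp, eval_add, eval_X, eval_natCast]

section Ordered

variable {S : Type*} [Semiring S] [PartialOrder S] [IsOrderedRing S]

theorem ascPochhammer_eval_nonneg (k : ℕ) {x : S} (hx : 0 ≤ x) :
    0 ≤ (ascPochhammer S k).eval x := by
  induction k with
  | zero => simp
  | succ k ih => rw [ascPochhammer_succ_eval]; positivity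

theorem ascPochhammer_eval_le_eval (k : ℕ) {x y : S} (hx : 0 ≤ x) (hxy : x ≤ y) :
    (ascPochhammer S k).eval x ≤ (ascPochhammer S k).eval y := by
  induction k with
  | zero => simp
  | succ k ih =>
    rw [ascPochhammer_succ_eval, ascPochhammer_succ_eval]
    exact mul_le_mul ih (add_le_add_left hxy _) (by positivity)
      ((ascPochhammer_eval_nonneg k hx).trans ih)

end Ordered

theorem abs_ascPochhammer_eval_div_le_one (k : ℕ) {x y : ℝ} (hx : 0 ≤ x) (hxy : x ≤ y) :
    |(ascPochhammer ℝ k).eval x / (ascPochhammer ℝ k).eval y| ≤ 1 := by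
  rw [abs_of_nonneg (div_nonneg (ascPochhammer_eval_nonneg k hx)
    (ascPochhammer_eval_nonneg k (hx.trans hxy)))]
  exact div_le_one_of_le₀ (ascPochhammer_eval_le_eval k hx hxy)
    (ascPochhammer_eval_nonneg k (hx.trans hxy))

theorem tsum_eq_tsum_nat_add_of_eq_zero {G : Type*} [AddCommGroup G] [TopologicalSpace G]
    [IsTopologicalAddGroup G] [T2Space G] {f : ℕ → G} {n : ℕ} (hf : ∀ m < n, f m = 0) :
    ∑' m, f m = ∑' k, f (k + n) := by
  by_cases hs : Summable f
  · rw [← hs.sum_add_tsum_nat_add n, Finset.sum_eq_zero fun m hm => hf m (Finset.mem_range.mp hm),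
      zero_add]
  · rw [tsum_eq_zero_of_not_summable hs,
      tsum_eq_zero_of_not_summable (mt (summable_nat_add_iff n).mp hs)]

noncomputable def confluentHypergeometricTerm (a b z : ℝ) (k : ℕ) : ℝ :=
  (ascPochhammer ℝ k).eval a / (ascPochhammer ℝ k).eval b * z ^ k / k !

noncomputable def confluentHypergeometric (a b z : ℝ) : ℝ :=
  ∑' k, confluentHypergeometricTerm a b z k

theorem abs_confluentHypergeometricTerm_le {a b : ℝ} (ha : 0 ≤ a) (hab : a ≤ b) (z : ℝ) (k : ℕ) :
    |confluentHypergeometricTerm a b z k| ≤ |z| ^ k / k ! := by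
  rw [confluentHypergeometricTerm, abs_div, abs_mul, abs_pow, Nat.abs_cast]
  gcongr
  exact mul_le_of_le_one_left (by positivity) (abs_ascPochhammer_eval_div_le_one k ha hab)

theorem summable_confluentHypergeometricTerm {a b : ℝ} (ha : 0 ≤ a) (hab : a ≤ b) (z : ℝ) :
    Summable (confluentHypergeometricTerm a b z) :=
  (Real.summable_pow_div_factorial |z|).of_norm_bounded
    (abs_confluentHypergeometricTerm_le ha hab z)

theorem confluentHypergeometricTerm_neg (a b z : ℝ) (k : ℕ) :
    confluentHypergeometricTerm a b (-z) k = (-1) ^ k * confluentHypergeometricTerm a b z k := by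
  simp only [confluentHypergeometricTerm, neg_pow z]
  ring

noncomputable def binomialMoment (a b t : ℝ) (m : ℕ) : ℝ :=
  1 / (m ! : ℝ) * t ^ m * ((ascPochhammer ℝ m).eval a / (ascPochhammer ℝ m).eval b)

theorem choose_mul_binomialMoment_add (a b t : ℝ) (n k : ℕ) :
    ((k + n).choose n : ℝ) * binomialMoment a b t (k + n) =
      binomialMoment a b t n * confluentHypergeometricTerm (a + n) (b + n) t k := by
  have hfact : ((n + k).choose n : ℝ) * n ! * k ! = (n + k) ! := by
    exact_mod_cast Nat.choose_symm_add ▸ Nat.add_choose_mul_factorial_mul_factorial n k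
  have hchoose : ((n + k).choose n : ℝ) ≠ 0 := mod_cast (Nat.choose_pos (Nat.le_add_right n k)).ne'
  -- `mul_div_mul_comm` holds even when a Pochhammer denominator vanishes, so no hypothesis on `b`.
  rw [binomialMoment, binomialMoment, confluentHypergeometricTerm, add_comm k n,
    ascPochhammer_eval_add, ascPochhammer_eval_add, mul_div_mul_comm, pow_add, ← hfact]
  field_simp

theorem summable_choose_mul_binomialMoment {a b : ℝ} (ha : 0 ≤ a) (hab : a ≤ b) (t : ℝ) (n : ℕ) :
    Summable fun m : ℕ => (m.choose n : ℝ) * binomialMoment a b t m := by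
  rw [← summable_nat_add_iff n]
  simp only [choose_mul_binomialMoment_add]
  exact (summable_confluentHypergeometricTerm (by positivity) (by gcongr) t).mul_left _

theorem tsum_alternating_choose_mul_binomialMoment (a b t : ℝ) (n : ℕ) :
    ∑' m : ℕ, (-1 : ℝ) ^ (m - n) * (m.choose n : ℝ) * binomialMoment a b t m =
      binomialMoment a b t n * confluentHypergeometric (a + n) (b + n) (-t) := by
  rw [tsum_eq_tsum_nat_add_of_eq_zero fun m (hm : m < n) => by simp [Nat.choose_eq_zero_of_lt hm],
    confluentHypergeometric, ← tsum_mul_left]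
  refine tsum_congr fun k => ?_
  rw [Nat.add_sub_cancel, mul_assoc, choose_mul_binomialMoment_add,
    confluentHypergeometricTerm_neg]
  ring

theorem telegraph_distribution_general
    (lam δ k₁ k₂ : ℝ) (hδ : 0 < δ) (hk₁ : 0 < k₁) (hk₂ : 0 < k₂)
    (B : ℕ → ℝ)
    (hB : ∀ m : ℕ, B m = (1 / (m.factorial : ℝ)) * (lam / δ) ^ m *
      ((ascPochhammer ℝ m).eval (k₂ / δ) /
        (ascPochhammer ℝ m).eval (k₁ / δ + k₂ / δ))) :
    ∀ n : ℕ,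
      (Summable fun m : ℕ => (m.choose n : ℝ) * B m) ∧
      (∑' m : ℕ, (-1 : ℝ) ^ (m - n) * (m.choose n : ℝ) * B m)
        = (1 / (n.factorial : ℝ)) * (lam / δ) ^ n *
            ((ascPochhammer ℝ n).eval (k₂ / δ) /
              (ascPochhammer ℝ n).eval (k₁ / δ + k₂ / δ)) *
            (∑' k : ℕ, ((ascPochhammer ℝ k).eval (k₂ / δ + n) /
                (ascPochhammer ℝ k).eval ((k₁ + k₂) / δ + n)) *
              (-(lam / δ)) ^ k / (k.factorial : ℝ)) := by
  intro n
  obtain rfl : B = binomialMoment (k₂ / δ) (k₁ / δ + k₂ / δ) (lam / δ) := funext hB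
  rw [add_div]
  exact ⟨summable_choose_mul_binomialMoment (by positivity)
      (le_add_of_nonneg_left (by positivity)) _ n,
    tsum_alternating_choose_mul_binomialMoment _ _ _ n⟩

/-- For the Telegraph model, the binomial moments
`B_m = (1/m!)(λ/δ)^m (k₂/δ)^{(m)}/((k₁/δ+k₂/δ)^{(m)})` determine the steady-state
distribution: the alternating inversion series converges absolutely and equals the
confluent hypergeometric expression
`(1/n!)(λ/δ)^n (k₂/δ)^{(n)}/((k₁/δ+k₂/δ)^{(n)}) ₁F₁(k₂/δ+n,(k₁+k₂)/δ+n;−λ/δ)`. -/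
theorem telegraph_distribution
    (lam δ k₁ k₂ : ℝ) (hlam : 0 < lam) (hδ : 0 < δ) (hk₁ : 0 < k₁) (hk₂ : 0 < k₂)
    (B : ℕ → ℝ)
    (hB : ∀ m : ℕ, B m = (1 / (m.factorial : ℝ)) * (lam / δ) ^ m *
      ((ascPochhammer ℝ m).eval (k₂ / δ) /
        (ascPochhammer ℝ m).eval (k₁ / δ + k₂ / δ))) :
    ∀ n : ℕ,
      (Summable fun m : ℕ => (m.choose n : ℝ) * B m) ∧
      (∑' m : ℕ, (-1 : ℝ) ^ (m - n) * (m.choose n : ℝ) * B m)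
        = (1 / (n.factorial : ℝ)) * (lam / δ) ^ n *
            ((ascPochhammer ℝ n).eval (k₂ / δ) /
              (ascPochhammer ℝ n).eval (k₁ / δ + k₂ / δ)) *
            (∑' k : ℕ, ((ascPochhammer ℝ k).eval (k₂ / δ + n) /
                (ascPochhammer ℝ k).eval ((k₁ + k₂) / δ + n)) *
              (-(lam / δ)) ^ k / (k.factorial : ℝ)) :=
  telegraph_distribution_general lam δ k₁ k₂ hδ hk₁ hk₂ B hB
end
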